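/- arXiv:2501.12347 — 5 statements merged into one kernel-verified Lean document; each statement's English description precedes it below -/
import Mathlib

section
/- Let Ω ⊂ ℝⁿ be a nonempty open bounded set and let x ∈ Ω be a point of the medial axis, i.e., Γ(x) contains at least two distinct points. If every closed ball in ℝⁿ containing Γ(x) has radius at least R(x)/√2, then the separation angle at x is at least π/4; that is, there exist y, z ∈ Γ(x) such that the angle between the vectors y − x and z − x is at least π/4. -/
/-!
Suppose every angle `∠ y x z` with `y, z ∈ Γ(x)` were less than `π/4`, and fix `y ∈ Γ(x)`.
All points of `Γ(x)` lie on the sphere of radius `R = R(x)` about `x`, and for a point `z` on that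
sphere the distance from `z` to `c = x + (y - x)/√2` satisfies
`|z - c|² = R² (3/2 - √2 cos ∠ y x z)`, which is `< R²/2` as soon as `∠ y x z < π/4`.
Since `Γ(x)` is compact, the farthest point of `Γ(x)` from `c` gives a ball about `c` of radius
`< R/√2` containing `Γ(x)`.
-/

open Metric Set EuclideanGeometry
open scoped RealInnerProductSpace

variable {V : Type*} [NormedAddCommGroup V] [InnerProductSpace ℝ V]

namespace InnerProductGeometry

theorem norm_sub_inv_sqrt_two_smul_lt {u v : V} {r : ℝ} (hu : ‖u‖ = r) (hv : ‖v‖ = r)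
    (h : angle u v < Real.pi / 4) : ‖v - (√2)⁻¹ • u‖ < r / √2 := by
  have hr : r ≠ 0 := by
    rintro rfl
    rw [norm_eq_zero.mp hu, angle_zero_left] at h
    linarith [Real.pi_pos]
  have hcos : √2 / 2 < Real.cos (angle u v) := by
    rw [← Real.cos_pi_div_four]
    exact Real.cos_lt_cos_of_nonneg_of_le_pi (angle_nonneg u v) (by linarith [Real.pi_pos]) h
  have hinner : √2 / 2 * r ^ 2 < ⟪u, v⟫ := by
    rw [← cos_angle_mul_norm_mul_norm, hu, hv, ← sq]
    exact mul_lt_mul_of_pos_right hcos (by positivity)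
  have hsqrt : √2 ^ 2 = 2 := Real.sq_sqrt zero_le_two
  have hsqrt_pos : 0 < √2 := by positivity
  have hsq : ‖v - (√2)⁻¹ • u‖ ^ 2 < (r / √2) ^ 2 := by
    rw [norm_sub_sq_real, real_inner_smul_right, real_inner_comm, norm_smul, Real.norm_eq_abs,
      abs_of_pos (inv_pos.mpr hsqrt_pos), hu, hv, div_pow, hsqrt, mul_pow, inv_pow, hsqrt]
    have hhalf : (√2)⁻¹ * (√2 / 2 * r ^ 2) = r ^ 2 / 2 := by field_simp
    nlinarith [mul_lt_mul_of_pos_left hinner (inv_pos.mpr hsqrt_pos)]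
  exact lt_of_pow_lt_pow_left₀ 2 (div_nonneg (hu ▸ norm_nonneg u) hsqrt_pos.le) hsq

end InnerProductGeometry

theorem IsCompact.exists_subset_closedBall_lt_of_angle_lt_pi_div_four {S : Set V}
    (hS : IsCompact S) {x y : V} {r : ℝ} (hsphere : S ⊆ sphere x r) (hy : y ∈ S)
    (hangle : ∀ z ∈ S, ∠ y x z < Real.pi / 4) :
    ∃ c ρ, ρ < r / √2 ∧ S ⊆ closedBall c ρ := by
  set c := x + (√2)⁻¹ • (y - x)
  have hnear : ∀ z ∈ S, dist z c < r / √2 := fun z hz => by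
    have hzc : z - c = (z - x) - (√2)⁻¹ • (y - x) := by simp only [c]; abel
    rw [dist_eq_norm, hzc]
    exact InnerProductGeometry.norm_sub_inv_sqrt_two_smul_lt
      (mem_sphere_iff_norm.mp (hsphere hy)) (mem_sphere_iff_norm.mp (hsphere hz)) (hangle z hz)
  obtain ⟨z₀, hz₀, hmax⟩ := hS.exists_isMaxOn ⟨y, hy⟩ (continuous_id.dist continuous_const).continuousOn
  exact ⟨c, dist z₀ c, hnear z₀ hz₀, fun z hz => mem_closedBall.mpr (hmax hz)⟩

theorem separation_angle_ge_pi_div_four_general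
    (n : ℕ) (Ω : Set (EuclideanSpace ℝ (Fin n)))
    (x : EuclideanSpace ℝ (Fin n))
    (Γ : Set (EuclideanSpace ℝ (Fin n)))
    (hΓ : Γ = {y ∈ frontier Ω | dist x y = infDist x (frontier Ω)})
    (hmedial : ∃ y ∈ Γ, ∃ z ∈ Γ, y ≠ z)
    (henclose : ∀ (c : EuclideanSpace ℝ (Fin n)) (R' : ℝ),
      Γ ⊆ closedBall c R' → infDist x (frontier Ω) / Real.sqrt 2 ≤ R') :
    ∃ y ∈ Γ, ∃ z ∈ Γ, Real.pi / 4 ≤ ∠ y x z := by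
  set R := infDist x (frontier Ω)
  have hΓ_eq : Γ = frontier Ω ∩ sphere x R := by
    rw [hΓ]; ext y; simp only [mem_ofPred_eq, mem_inter_iff, Metric.mem_sphere, dist_comm]
  have hΓ_compact : IsCompact Γ := hΓ_eq ▸ (isCompact_sphere x R).inter_left isClosed_frontier
  by_contra! hsmall
  obtain ⟨y, hy, -⟩ := hmedial
  obtain ⟨c, ρ, hρ, hsub⟩ := hΓ_compact.exists_subset_closedBall_lt_of_angle_lt_pi_div_four
    (hΓ_eq ▸ inter_subset_right) hy (hsmall y hy)
  exact hρ.not_ge (henclose c ρ hsub)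

theorem separation_angle_ge_pi_div_four
    (n : ℕ) (Ω : Set (EuclideanSpace ℝ (Fin n)))
    (hΩo : IsOpen Ω) (hΩb : Bornology.IsBounded Ω) (hΩne : Ω.Nonempty)
    (x : EuclideanSpace ℝ (Fin n)) (hx : x ∈ Ω)
    (Γ : Set (EuclideanSpace ℝ (Fin n)))
    (hΓ : Γ = {y ∈ frontier Ω | dist x y = infDist x (frontier Ω)})
    (hmedial : ∃ y ∈ Γ, ∃ z ∈ Γ, y ≠ z)
    (henclose : ∀ (c : EuclideanSpace ℝ (Fin n)) (R' : ℝ),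
      Γ ⊆ closedBall c R' → infDist x (frontier Ω) / Real.sqrt 2 ≤ R') :
    ∃ y ∈ Γ, ∃ z ∈ Γ, Real.pi / 4 ≤ ∠ y x z :=
  separation_angle_ge_pi_div_four_general n Ω x Γ hΓ hmedial henclose
end

section
/- Let Ω ⊂ ℝ³ be a nonempty open bounded set. Then there exist x ∈ Ω and r > 0 such that: (i) B(x,r) ⊆ Ω; (ii) r is maximal, i.e., r = sup{ ρ > 0 : there is an open ball of radius ρ contained in Ω }; and (iii) every closed hemisphere of ∂B(x,r) meets ∂Ω — that is, for every unit vector w ∈ ℝ³ there exists y ∈ ∂Ω with |y − x| = r and ⟨y − x, w⟩ ≥ 0. -/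
open Metric Set

noncomputable abbrev E3 := EuclideanSpace ℝ (Fin 3)

/-!
The center `x` of a largest inscribed ball maximizes `y ↦ infDist y Ωᶜ`, which exists by
compactness of `closure Ω`. If some closed hemisphere of `∂B(x, r)` (direction `w`) missed `∂Ω`,
the closed half-ball on that side would be a compact subset of `Ω`, hence have an `ε`-thickening
inside `Ω`. Moving the center by `t • w` with `t = ε / 2` then yields an inscribed ball of radius
`√(r ^ 2 + t ^ 2) > r`: its part behind the hyperplane through `x` orthogonal to `w` lies in
`B(x, r)`, and its part in front lies within `2 * t` of the half-ball.
-/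

open scoped RealInnerProductSpace

section Metric

variable {α : Type*} [MetricSpace α]

lemma le_infDist_compl_of_ball_subset {Ω : Set α} (hΩ : Ωᶜ.Nonempty) {y : α} {ρ : ℝ}
    (h : ball y ρ ⊆ Ω) : ρ ≤ infDist y Ωᶜ :=
  (le_infDist hΩ).2 fun _ hz => not_lt.1 fun hlt => hz (h (mem_ball'.2 hlt))

lemma exists_ball_subset_forall_ball_subset_le [ProperSpace α] {Ω : Set α} (hΩo : IsOpen Ω)
    (hΩb : Bornology.IsBounded Ω) (hΩne : Ω.Nonempty) (hΩc : Ωᶜ.Nonempty) :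
    ∃ x r, 0 < r ∧ ball x r ⊆ Ω ∧ ∀ y ρ, ball y ρ ⊆ Ω → ρ ≤ r := by
  obtain ⟨x, -, hmax⟩ := hΩb.isCompact_closure.exists_isMaxOn hΩne.closure
    (continuous_infDist_pt Ωᶜ).continuousOn
  obtain ⟨x₀, hx₀⟩ := hΩne
  have hpos : 0 < infDist x₀ Ωᶜ :=
    (hΩo.isClosed_compl.notMem_iff_infDist_pos hΩc).1 (not_not_intro hx₀)
  refine ⟨x, _, hpos.trans_le (hmax (subset_closure hx₀)), ball_infDist_compl_subset,
    fun y ρ h => ?_⟩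
  rcases le_or_gt ρ 0 with hρ | hρ
  · exact hρ.trans (hpos.le.trans (hmax (subset_closure hx₀)))
  · exact (le_infDist_compl_of_ball_subset hΩc h).trans
      (hmax (subset_closure (h (mem_ball_self hρ))))

lemma eq_sSup_radii_of_ball_subset {Ω : Set α} {x : α} {r : ℝ} (hr : 0 < r)
    (hball : ball x r ⊆ Ω) (hmax : ∀ y ρ, ball y ρ ⊆ Ω → ρ ≤ r) :
    r = sSup {ρ : ℝ | 0 < ρ ∧ ∃ y, ball y ρ ⊆ Ω} :=
  (show IsGreatest {ρ : ℝ | 0 < ρ ∧ ∃ y, ball y ρ ⊆ Ω} r from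
    ⟨⟨hr, x, hball⟩, fun _ ⟨_, y, hy⟩ => hmax y _ hy⟩).csSup_eq.symm

end Metric

section Normed

variable {E : Type*} [NormedAddCommGroup E] [NormedSpace ℝ E]

lemma closedBall_diff_subset_frontier_inter_sphere {Ω : Set E} (hΩ : IsOpen Ω) {x : E} {r : ℝ}
    (hr : r ≠ 0) (h : ball x r ⊆ Ω) : closedBall x r \ Ω ⊆ frontier Ω ∩ sphere x r := by
  rintro y ⟨hy, hyΩ⟩
  refine ⟨?_, ?_⟩
  · rw [hΩ.frontier_eq]
    exact ⟨closure_mono h (closure_ball x hr ▸ hy), hyΩ⟩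
  · rw [← closedBall_sdiff_ball]
    exact ⟨hy, fun hb => hyΩ (h hb)⟩

end Normed

section Inner

variable {E : Type*} [NormedAddCommGroup E] [InnerProductSpace ℝ E]

def closedHalfBall (x : E) (r : ℝ) (w : E) : Set E :=
  closedBall x r ∩ {y | 0 ≤ ⟪y - x, w⟫}

lemma isCompact_closedHalfBall [ProperSpace E] (x : E) (r : ℝ) (w : E) :
    IsCompact (closedHalfBall x r w) :=
  (isCompact_closedBall x r).inter_right
    (isClosed_le continuous_const ((continuous_id.sub continuous_const).inner continuous_const))

lemma mem_thickening_closedHalfBall {x w z : E} {r ε : ℝ} (hr : 0 ≤ r) (hε : 0 < ε)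
    (hz : 0 ≤ ⟪z - x, w⟫) (hzε : ‖z - x‖ < r + ε) : z ∈ thickening ε (closedHalfBall x r w) := by
  rcases le_or_gt ‖z - x‖ r with hzr | hzr
  · exact self_subset_thickening hε _ ⟨mem_closedBall_iff_norm.2 hzr, hz⟩
  have hpos : 0 < ‖z - x‖ := hr.trans_lt hzr
  set c := r / ‖z - x‖
  have hc : 0 ≤ c := div_nonneg hr hpos.le
  refine mem_thickening_iff.2 ⟨x + c • (z - x), ⟨?_, ?_⟩, ?_⟩
  · rw [mem_closedBall_iff_norm, add_sub_cancel_left, norm_smul, Real.norm_of_nonneg hc,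
      div_mul_cancel₀ _ hpos.ne']
  · simpa only [mem_ofPred_eq, add_sub_cancel_left, real_inner_smul_left] using mul_nonneg hc hz
  · have hc1 : c ≤ 1 := (div_le_one hpos).2 hzr.le
    have : z - (x + c • (z - x)) = (1 - c) • (z - x) := by
      rw [sub_smul, one_smul]; abel
    rw [dist_eq_norm, this, norm_smul, Real.norm_of_nonneg (sub_nonneg.2 hc1), sub_mul,
      one_mul, div_mul_cancel₀ _ hpos.ne']
    linarith

lemma ball_add_smul_subset_union {x w : E} {r t : ℝ} (hr : 0 ≤ r) (ht : 0 < t) (hw : ‖w‖ = 1) :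
    ball (x + t • w) √(r ^ 2 + t ^ 2) ⊆ ball x r ∪ thickening (2 * t) (closedHalfBall x r w) := by
  intro z hz
  set u := z - (x + t • w)
  have hzx : z - x = u + t • w := by simp only [u]; abel
  have hu : ‖u‖ ^ 2 < r ^ 2 + t ^ 2 :=
    (Real.lt_sqrt (norm_nonneg u)).1 (mem_ball_iff_norm.1 hz)
  have hinner : ⟪z - x, w⟫ = ⟪u, w⟫ + t := by
    rw [hzx, inner_add_left, real_inner_smul_left, real_inner_self_eq_norm_sq, hw]; ring
  rcases lt_or_ge ⟪z - x, w⟫ 0 with hneg | hnonneg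
  · left
    have hsq : ‖z - x‖ ^ 2 = ‖u‖ ^ 2 + 2 * t * ⟪z - x, w⟫ - t ^ 2 := by
      rw [hinner, hzx, norm_add_sq_real, norm_smul, real_inner_smul_right,
        Real.norm_of_nonneg ht.le, hw]
      ring
    refine mem_ball_iff_norm.2 (lt_of_pow_lt_pow_left₀ 2 hr ?_)
    nlinarith
  · right
    have hsqrt : √(r ^ 2 + t ^ 2) ≤ r + t :=
      Real.sqrt_le_iff.2 ⟨by linarith, by nlinarith⟩
    refine mem_thickening_closedHalfBall hr (by linarith) hnonneg ?_
    calc ‖z - x‖ ≤ ‖u‖ + ‖t • w‖ := hzx ▸ norm_add_le _ _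
      _ = ‖u‖ + t := by rw [norm_smul, Real.norm_of_nonneg ht.le, hw, mul_one]
      _ < r + 2 * t := by linarith [mem_ball_iff_norm.1 hz]

lemma exists_mem_frontier_dist_eq_inner_nonneg [ProperSpace E] {Ω : Set E} (hΩ : IsOpen Ω)
    {x : E} {r : ℝ} (hr : 0 < r) (hball : ball x r ⊆ Ω) (hmax : ∀ y ρ, ball y ρ ⊆ Ω → ρ ≤ r)
    {w : E} (hw : ‖w‖ = 1) : ∃ y ∈ frontier Ω, dist y x = r ∧ 0 ≤ ⟪y - x, w⟫ := by
  by_contra! hcon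
  have hK : closedHalfBall x r w ⊆ Ω := fun y hy => by_contra fun hyΩ => by
    obtain ⟨hfr, hsph⟩ := closedBall_diff_subset_frontier_inter_sphere hΩ hr.ne' hball ⟨hy.1, hyΩ⟩
    exact (hcon y hfr hsph).not_ge hy.2
  obtain ⟨ε, hε, hthick⟩ := (isCompact_closedHalfBall x r w).exists_thickening_subset_open hΩ hK
  have hε' : 2 * (ε / 2) = ε := by ring
  have hle : √(r ^ 2 + (ε / 2) ^ 2) ≤ r := hmax _ _ <|
    (ball_add_smul_subset_union hr.le (half_pos hε) hw).trans (union_subset hball (by rwa [hε']))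
  have hlt : r < √(r ^ 2 + (ε / 2) ^ 2) := by
    rw [Real.lt_sqrt hr.le]; nlinarith
  exact hle.not_gt hlt

end Inner

theorem exists_maximal_inscribed_ball
    (Ω : Set E3) (hΩo : IsOpen Ω) (hΩb : Bornology.IsBounded Ω) (hΩne : Ω.Nonempty) :
    ∃ (x : E3) (r : ℝ), 0 < r ∧ ball x r ⊆ Ω ∧
      r = sSup {ρ : ℝ | 0 < ρ ∧ ∃ y : E3, ball y ρ ⊆ Ω} ∧
      ∀ w : E3, ‖w‖ = 1 →
        ∃ y ∈ frontier Ω, dist y x = r ∧ (0:ℝ) ≤ inner ℝ (y - x) w := by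
  have hΩc : Ωᶜ.Nonempty := nonempty_compl.2 fun h => NormedSpace.unbounded_univ ℝ E3 (h ▸ hΩb)
  obtain ⟨x, r, hr, hball, hmax⟩ :=
    exists_ball_subset_forall_ball_subset_le hΩo hΩb hΩne hΩc
  exact ⟨x, r, hr, hball, eq_sSup_radii_of_ball_subset hr hball hmax,
    fun w hw => exists_mem_frontier_dist_eq_inner_nonneg hΩo hr hball hmax hw⟩
end

section
/- Let Ω ⊂ ℝ³ be a nonempty open bounded set. Then there exist x ∈ ℝ³, r > 0, and points y, z ∈ ∂Ω with |y − x| = |z − x| = r such that B(x,r) ⊆ Ω and ⟨y − x, z − x⟩ ≤ 0 (so the angle between y − x and z − x is at least π/2). In particular, the family 𝒜(Ω) of balls contained in Ω touching the boundary in two directions making an angle of at least π/4 is nonempty. -/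
/-!
Take a point `x` of `Ω` maximizing the distance `r` to `Ωᶜ`; then `B(x, r) ⊆ Ω` and the sphere
of radius `r` around `x` meets `Ωᶜ`. If all such contact points made pairwise acute angles
(measured at `x`), fix one contact point `y₀` and move the center slightly from `x` away from
`y₀`: points of `Ωᶜ` in the half-space on the side of `y₀` get strictly farther by
Pythagoras, and those on the other side are already uniformly farther than `r` by compactness.
The new center would then be farther than `r` from `Ωᶜ`, contradicting maximality.
-/

open Metric Set

open scoped RealInnerProductSpace

theorem IsClosed.exists_pos_forall_add_le_dist {α : Type*} [PseudoMetricSpace α] [ProperSpace α]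
    {S : Set α} (hS : IsClosed S) {x : α} {r : ℝ} (h : ∀ w ∈ S, r < dist w x) :
    ∃ η > 0, ∀ w ∈ S, r + η ≤ dist w x := by
  rcases S.eq_empty_or_nonempty with rfl | hne
  · exact ⟨1, one_pos, by simp⟩
  obtain ⟨w₀, hw₀, hw₀d⟩ := hS.exists_infDist_eq_dist hne x
  refine ⟨dist w₀ x - r, by linarith [h w₀ hw₀], fun w hw => ?_⟩
  have := infDist_le_dist_of_mem (x := x) hw
  rw [hw₀d, dist_comm x, dist_comm x] at this
  linarith

theorem Bornology.IsBounded.exists_forall_infDist_compl_le {α : Type*} [PseudoMetricSpace α]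
    [ProperSpace α] {U : Set α} (hb : IsBounded U) (hne : U.Nonempty) :
    ∃ x, ∀ y, infDist y Uᶜ ≤ infDist x Uᶜ := by
  obtain ⟨x, -, hmax⟩ :=
    hb.isCompact_closure.exists_isMaxOn hne.closure (continuous_infDist_pt Uᶜ).continuousOn
  refine ⟨x, fun y => ?_⟩
  by_cases hy : y ∈ U
  · exact hmax (subset_closure hy)
  · rw [infDist_zero_of_mem hy]
    exact infDist_nonneg

theorem mem_frontier_of_ball_subset {E : Type*} [NormedAddCommGroup E] [NormedSpace ℝ E]
    {U : Set E} {x y : E} {r : ℝ} (hr : r ≠ 0) (hU : ball x r ⊆ U) (hy : y ∉ U)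
    (hyr : dist y x = r) : y ∈ frontier U :=
  ⟨closure_mono hU (by rw [closure_ball x hr]; exact hyr.le), fun h => hy (interior_subset h)⟩

section InnerProductSpace

variable {E : Type*} [NormedAddCommGroup E] [InnerProductSpace ℝ E]

theorem dist_sq_add_sq_le_dist_sub_smul_sq {w x v : E} {t : ℝ} (ht : 0 ≤ t)
    (hwv : 0 ≤ ⟪w - x, v⟫) : dist w x ^ 2 + (t * ‖v‖) ^ 2 ≤ dist w (x - t • v) ^ 2 := by
  have hsub : w - (x - t • v) = (w - x) + t • v := by abel
  rw [dist_eq_norm, dist_eq_norm, hsub, norm_add_sq_real, real_inner_smul_right, norm_smul,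
    Real.norm_eq_abs, abs_of_nonneg ht]
  nlinarith [mul_nonneg ht hwv]

theorem exists_infDist_lt_infDist_sub_smul {s : Set E} (hs : s.Nonempty) {x v : E} (hv : v ≠ 0)
    {η : ℝ} (hη : 0 < η) (hfar : ∀ w ∈ s, ⟪w - x, v⟫ < 0 → infDist x s + η ≤ dist w x) :
    ∃ t : ℝ, infDist x s < infDist (x - t • v) s := by
  set r := infDist x s
  have hr : 0 ≤ r := infDist_nonneg
  set t := η / (2 * ‖v‖)
  have ht : 0 ≤ t := by positivity
  have htv : t * ‖v‖ = η / 2 := by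
    simp only [t]
    field_simp [norm_ne_zero_iff.2 hv]
  have hbound : ∀ w ∈ s, min √(r ^ 2 + (η / 2) ^ 2) (r + η / 2) ≤ dist (x - t • v) w := by
    intro w hw
    rw [dist_comm]
    rcases le_or_gt 0 ⟪w - x, v⟫ with hwv | hwv
    · refine min_le_of_left_le (Real.sqrt_le_iff.2 ⟨dist_nonneg, ?_⟩)
      have hrw : r ≤ dist w x := (infDist_le_dist_of_mem hw).trans_eq (dist_comm x w)
      have := dist_sq_add_sq_le_dist_sub_smul_sq ht hwv
      rw [htv] at this
      nlinarith
    · refine min_le_of_right_le ?_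
      have hshift : dist (x - t • v) x = η / 2 := by
        rw [dist_eq_norm, sub_sub_cancel_left, norm_neg, norm_smul, Real.norm_eq_abs,
          abs_of_nonneg ht, htv]
      linarith [hfar w hw hwv, dist_triangle w (x - t • v) x]
  refine ⟨t, lt_of_lt_of_le (lt_min ?_ (by linarith)) ((le_infDist hs).2 hbound)⟩
  exact (Real.lt_sqrt hr).2 (by nlinarith)

theorem exists_inner_nonpos_of_forall_infDist_le [ProperSpace E] {s : Set E} (hs : IsClosed s)
    (hne : s.Nonempty) {x : E} (hmax : ∀ y, infDist y s ≤ infDist x s) :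
    ∃ y ∈ s, ∃ z ∈ s, dist y x = infDist x s ∧ dist z x = infDist x s ∧ ⟪y - x, z - x⟫ ≤ 0 := by
  by_contra! hpos
  obtain ⟨y₀, hy₀, hy₀d⟩ := hs.exists_infDist_eq_dist hne x
  rw [dist_comm] at hy₀d
  have hv : y₀ - x ≠ 0 := fun h => (hpos y₀ hy₀ y₀ hy₀ hy₀d.symm hy₀d.symm).ne' (by simp [h])
  set S := {w ∈ s | ⟪w - x, y₀ - x⟫ ≤ 0}
  have hS : IsClosed S :=
    hs.inter (isClosed_le (by fun_prop : Continuous fun w => ⟪w - x, y₀ - x⟫) continuous_const)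
  have hfar : ∀ w ∈ S, infDist x s < dist w x := by
    rintro w ⟨hw, hwv⟩
    refine ((infDist_le_dist_of_mem hw).trans_eq (dist_comm x w)).lt_of_ne fun hwd => ?_
    exact (hpos w hw y₀ hy₀ hwd.symm hy₀d.symm).not_ge hwv
  obtain ⟨η, hη, hη_far⟩ := hS.exists_pos_forall_add_le_dist hfar
  obtain ⟨t, ht⟩ :=
    exists_infDist_lt_infDist_sub_smul hne hv hη fun w hw hwv => hη_far w ⟨hw, hwv.le⟩
  exact (hmax _).not_gt ht

end InnerProductSpace

theorem exists_ball_touching_in_two_directions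
    (Ω : Set E3) (hΩo : IsOpen Ω) (hΩb : Bornology.IsBounded Ω) (hΩne : Ω.Nonempty) :
    ∃ (x : E3) (r : ℝ) (y z : E3), 0 < r ∧ ball x r ⊆ Ω ∧
      y ∈ frontier Ω ∧ z ∈ frontier Ω ∧
      dist y x = r ∧ dist z x = r ∧
      (inner ℝ (y - x) (z - x) : ℝ) ≤ 0 := by
  have hcompl : Ωᶜ.Nonempty :=
    nonempty_compl.2 fun h => NormedSpace.unbounded_univ ℝ E3 (h ▸ hΩb)
  obtain ⟨x, hmax⟩ := hΩb.exists_forall_infDist_compl_le hΩne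
  obtain ⟨p, hp⟩ := hΩne
  have hr : 0 < infDist x Ωᶜ :=
    ((hΩo.isClosed_compl.notMem_iff_infDist_pos hcompl).1 (not_not.2 hp)).trans_le (hmax p)
  obtain ⟨y, hy, z, hz, hyd, hzd, hyz⟩ :=
    exists_inner_nonpos_of_forall_infDist_le hΩo.isClosed_compl hcompl hmax
  have hball : ball x (infDist x Ωᶜ) ⊆ Ω := ball_infDist_compl_subset
  exact ⟨x, _, y, z, hr, hball, mem_frontier_of_ball_subset hr.ne' hball hy hyd,
    mem_frontier_of_ball_subset hr.ne' hball hz hzd, hyd, hzd, hyz⟩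
end

section
/- Let Ω ⊂ ℝ³ be a nonempty open bounded set. Suppose that 𝒜(Ω) is nonempty and that ρ := inf{ r > 0 : some ball of radius r belongs to 𝒜(Ω) } is strictly positive. Then the infimum is attained: there exist x ∈ ℝ³ and points y, z ∈ ∂Ω with |y − x| = |z − x| = ρ, the angle between y − x and z − x at least π/4, and B(x,ρ) ⊆ Ω; i.e., B(x,ρ) ∈ 𝒜(Ω). -/
open Metric Set EuclideanGeometry

/-- `memA Ω x r` says that the open ball `B(x,r)` belongs to the family `𝒜(Ω)`:
it is contained in `Ω` and touches `∂Ω` at two points `y, z` with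
`∠ y x z ≥ π/4`. -/
def memA (Ω : Set E3) (x : E3) (r : ℝ) : Prop :=
  ball x r ⊆ Ω ∧ ∃ y z : E3, y ∈ frontier Ω ∧ z ∈ frontier Ω ∧
    dist y x = r ∧ dist z x = r ∧ Real.pi / 4 ≤ ∠ y x z

/-!
Take a sequence of balls `B(xₙ, rₙ) ∈ 𝒜(Ω)` with `rₙ → ρ`, with contact points `yₙ, zₙ`.
Centres and contact points lie in the compact set `closure Ω`, so along a subsequence
`xₙ → a`, `yₙ → b`, `zₙ → c`. Every condition defining `𝒜(Ω)` survives the limit: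
each point of `B(a, ρ)` lies in `B(xₙ, rₙ)` for large `n`, the frontier is closed,
distances are continuous, and so is the angle, because `dist b a = dist c a = ρ > 0`
keeps `b` and `c` away from the vertex `a`.
-/

open Filter Topology

theorem Metric.ball_subset_of_tendsto {X ι : Type*} [PseudoMetricSpace X] {l : Filter ι}
    [l.NeBot] {s : Set X} {x : ι → X} {r : ι → ℝ} {a : X} {ρ : ℝ}
    (hx : Tendsto x l (𝓝 a)) (hr : Tendsto r l (𝓝 ρ)) (hs : ∀ᶠ i in l, ball (x i) (r i) ⊆ s) :
    ball a ρ ⊆ s := by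
  intro w hw
  have hgap : Tendsto (fun i => r i - dist w (x i)) l (𝓝 (ρ - dist w a)) :=
    hr.sub (tendsto_const_nhds.dist hx)
  obtain ⟨i, hi, hpos⟩ :=
    (hs.and (hgap.eventually (eventually_gt_nhds (sub_pos.2 (mem_ball.1 hw))))).exists
  exact hi (mem_ball.2 (sub_pos.1 hpos))

theorem EuclideanGeometry.le_angle_of_tendsto {V P ι : Type*} [NormedAddCommGroup V]
    [InnerProductSpace ℝ V] [MetricSpace P] [NormedAddTorsor V P] {l : Filter ι} [l.NeBot]
    {x y z : ι → P} {a b c : P} {θ : ℝ} (hx : Tendsto x l (𝓝 a)) (hy : Tendsto y l (𝓝 b))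
    (hz : Tendsto z l (𝓝 c)) (hba : b ≠ a) (hca : c ≠ a) (hθ : ∀ᶠ i in l, θ ≤ ∠ (y i) (x i) (z i)) :
    θ ≤ ∠ b a c :=
  ge_of_tendsto ((continuousAt_angle (x := (b, a, c)) hba hca).tendsto.comp
    (hy.prodMk_nhds (hx.prodMk_nhds hz))) hθ

def TouchesAt (Ω : Set E3) (x : E3) (r : ℝ) (y z : E3) : Prop :=
  ball x r ⊆ Ω ∧ y ∈ frontier Ω ∧ z ∈ frontier Ω ∧
    dist y x = r ∧ dist z x = r ∧ Real.pi / 4 ≤ ∠ y x z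

theorem memA_iff_exists_touchesAt {Ω : Set E3} {x : E3} {r : ℝ} :
    memA Ω x r ↔ ∃ y z, TouchesAt Ω x r y z := by
  simp only [memA, TouchesAt, exists_and_left]

theorem TouchesAt.center_mem {Ω : Set E3} {x y z : E3} {r : ℝ} (h : TouchesAt Ω x r y z)
    (hr : 0 < r) : x ∈ Ω :=
  h.1 (mem_ball_self hr)

theorem touchesAt_of_tendsto {ι : Type*} {l : Filter ι} [l.NeBot] {Ω : Set E3}
    {x y z : ι → E3} {r : ι → ℝ} {a b c : E3} {ρ : ℝ} (hx : Tendsto x l (𝓝 a))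
    (hy : Tendsto y l (𝓝 b)) (hz : Tendsto z l (𝓝 c)) (hr : Tendsto r l (𝓝 ρ)) (hρ : 0 < ρ)
    (h : ∀ i, TouchesAt Ω (x i) (r i) (y i) (z i)) : TouchesAt Ω a ρ b c := by
  have hdist_b : dist b a = ρ :=
    tendsto_nhds_unique (hy.dist hx) (hr.congr fun i => (h i).2.2.2.1.symm)
  have hdist_c : dist c a = ρ :=
    tendsto_nhds_unique (hz.dist hx) (hr.congr fun i => (h i).2.2.2.2.1.symm)
  have hba : b ≠ a := dist_pos.1 (hdist_b ▸ hρ)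
  have hca : c ≠ a := dist_pos.1 (hdist_c ▸ hρ)
  exact ⟨ball_subset_of_tendsto hx hr (.of_forall fun i => (h i).1),
    isClosed_frontier.mem_of_tendsto hy (.of_forall fun i => (h i).2.1),
    isClosed_frontier.mem_of_tendsto hz (.of_forall fun i => (h i).2.2.1),
    hdist_b, hdist_c,
    le_angle_of_tendsto hx hy hz hba hca (.of_forall fun i => (h i).2.2.2.2.2)⟩

theorem exists_minimal_ball_in_A_general
    (Ω : Set E3) (hΩb : Bornology.IsBounded Ω)
    (ρ : ℝ) (hρ : ρ = sInf {r : ℝ | 0 < r ∧ ∃ x : E3, memA Ω x r})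
    (hne : {r : ℝ | 0 < r ∧ ∃ x : E3, memA Ω x r}.Nonempty)
    (hρpos : 0 < ρ) :
    ∃ x : E3, memA Ω x ρ := by
  obtain ⟨r, -, hr, hrA⟩ := exists_seq_tendsto_sInf hne ⟨0, fun r hr => hr.1.le⟩
  rw [← hρ] at hr
  choose x hx using fun n => (hrA n).2
  choose y z hxyz using fun n => memA_iff_exists_touchesAt.1 (hx n)
  have hK : IsCompact (closure Ω) := hΩb.isCompact_closure
  obtain ⟨⟨a, b, c⟩, -, φ, hφ, hconv⟩ := (hK.prod (hK.prod hK)).tendsto_subseq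
    (x := fun n => (x n, y n, z n)) fun n =>
      ⟨subset_closure ((hxyz n).center_mem (hrA n).1),
        frontier_subset_closure (hxyz n).2.1, frontier_subset_closure (hxyz n).2.2.1⟩
  obtain ⟨hxa, hyzbc⟩ := (Prod.tendsto_iff _ _).1 hconv
  obtain ⟨hyb, hzc⟩ := (Prod.tendsto_iff _ _).1 hyzbc
  exact ⟨a, memA_iff_exists_touchesAt.2 ⟨b, c, touchesAt_of_tendsto hxa hyb hzc
    (hr.comp hφ.tendsto_atTop) hρpos fun n => hxyz (φ n)⟩⟩

theorem exists_minimal_ball_in_A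
    (Ω : Set E3) (hΩo : IsOpen Ω) (hΩb : Bornology.IsBounded Ω) (hΩne : Ω.Nonempty)
    (ρ : ℝ) (hρ : ρ = sInf {r : ℝ | 0 < r ∧ ∃ x : E3, memA Ω x r})
    (hne : {r : ℝ | 0 < r ∧ ∃ x : E3, memA Ω x r}.Nonempty)
    (hρpos : 0 < ρ) :
    ∃ x : E3, memA Ω x ρ :=
  exists_minimal_ball_in_A_general Ω hΩb ρ hρ hne hρpos
end

section
/- For every t ≥ 0 and all real numbers U, W satisfying U ≥ 8π and 3W ≤ U + 4π, the following inequality holds: (e^{t/2}/(1+e^{2t})^{3/2})·W − (e^{t/2}/(2·(1+e^{2t})^{1/2}))·U ≤ −4π·e^{5t/2}/(1+e^{2t})^{3/2}. Equality holds when U = 8π and W = 4π. -/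
open Real

theorem key_pointwise_inequality (t : ℝ) (ht : 0 ≤ t) :
    (∀ U W : ℝ, 8 * π ≤ U → 3 * W ≤ U + 4 * π →
      (Real.exp (t/2) / (1 + Real.exp (2*t)) ^ ((3:ℝ)/2)) * W
          - (Real.exp (t/2) / (2 * (1 + Real.exp (2*t)) ^ ((1:ℝ)/2))) * U
        ≤ -4 * π * Real.exp (5*t/2) / (1 + Real.exp (2*t)) ^ ((3:ℝ)/2)) ∧
    ((Real.exp (t/2) / (1 + Real.exp (2*t)) ^ ((3:ℝ)/2)) * (4 * π)
          - (Real.exp (t/2) / (2 * (1 + Real.exp (2*t)) ^ ((1:ℝ)/2))) * (8 * π)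
        = -4 * π * Real.exp (5*t/2) / (1 + Real.exp (2*t)) ^ ((3:ℝ)/2)) := by
  set E := Real.exp (2*t) with hE
  have hA : (0:ℝ) < 1 + E := by positivity
  have hE1 : (1:ℝ) ≤ E := by
    rw [hE]; exact Real.one_le_exp (by linarith)
  set s := (1 + E) ^ ((1:ℝ)/2) with hs
  have hs0 : 0 < s := Real.rpow_pos_of_pos hA _
  have hs2 : s * s = 1 + E := by
    rw [hs, ← Real.rpow_add hA]; norm_num
  have h32 : (1 + E) ^ ((3:ℝ)/2) = s * (1 + E) := by
    rw [hs, show (3:ℝ)/2 = 1/2 + 1 by norm_num, Real.rpow_add hA, Real.rpow_one]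
  have h52 : Real.exp (5*t/2) = Real.exp (t/2) * E := by
    rw [hE, ← Real.exp_add]; ring_nf
  have he : 0 < Real.exp (t/2) := Real.exp_pos _
  have hπ : 0 < π := Real.pi_pos
  have hs1 : 1 ≤ s * s := by linarith
  constructor
  · intro U W hU hW
    rw [h32, h52]
    have hE2 : E = s * s - 1 := by linarith
    rw [hE2, show (1:ℝ) + (s*s-1) = s*s by ring]
    have hnum : 2*W - (s*s)*U + 8*π*(s*s-1) ≤ 0 := by
      nlinarith [mul_nonneg (by nlinarith : (0:ℝ) ≤ s*s - 1 + 1/3)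
        (by linarith : (0:ℝ) ≤ U - 8*π)]
    rw [div_mul_eq_mul_div, div_mul_eq_mul_div, div_sub_div _ _ (by positivity) (by positivity),
      div_le_div_iff₀ (by positivity) (by positivity)]
    nlinarith [mul_nonpos_of_nonneg_of_nonpos he.le hnum, hs0, sq_nonneg s,
      mul_pos hs0 hs0, mul_pos (mul_pos hs0 hs0) hs0,
      mul_nonpos_of_nonneg_of_nonpos (by positivity : (0:ℝ) ≤ Real.exp (t/2) * (s*s*s)) hnum]
  · rw [h32, h52]
    have hE2 : E = s * s - 1 := by linarith
    rw [hE2, show (1:ℝ) + (s*s-1) = s*s by ring]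
    field_simp
    ring
end
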